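/- A matrix C ∈ SO₀(2,1) commutes with I = diag(-1,1,1) if and only if C = 1 ⊕ R for some 2×2 rotation matrix R. -/

import Mathlib

open Matrix
noncomputable def Imat : Matrix (Fin 3) (Fin 3) ℝ := diagonal ![-1, 1, 1]
noncomputable def amat : Matrix (Fin 3) (Fin 3) ℝ := !![0,1,0; 1,0,0; 0,0,0]
noncomputable def bmat : Matrix (Fin 3) (Fin 3) ℝ := !![0,0,1; 0,0,0; 1,0,0]
noncomputable def cmat : Matrix (Fin 3) (Fin 3) ℝ := !![0,0,0; 0,0,-1; 0,1,0]
noncomputable def rot2 (η : ℝ) : Matrix (Fin 2) (Fin 2) ℝ :=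
  !![Real.cos η, -Real.sin η; Real.sin η, Real.cos η]
noncomputable def Kmat (η : ℝ) : Matrix (Fin 3) (Fin 3) ℝ :=
  !![1,0,0; 0,Real.cos η,-Real.sin η; 0,Real.sin η,Real.cos η]
def inSO21 (C : Matrix (Fin 3) (Fin 3) ℝ) : Prop :=
  C⁻¹ = Imat * Cᵀ * Imat ∧ C.det = 1 ∧ 1 ≤ C 0 0

/-!
Commuting with the diagonal matrix `I = diag(-1, 1, 1)` kills exactly the entries of `C` that
mix the `-1`- and `1`-eigenspaces of `I`, so `C` is block diagonal. The relation `C I Cᵀ = I`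
then gives `c₀₀² = 1`, hence `c₀₀ = 1`, and makes the lower `2 × 2` block orthogonal of
determinant `1`, that is, a rotation.
-/

theorem Matrix.mul_diagonal_eq_diagonal_mul_iff {n K : Type*} [Fintype n] [DecidableEq n]
    [CommRing K] [NoZeroDivisors K] (M : Matrix n n K) (d : n → K) :
    M * diagonal d = diagonal d * M ↔ ∀ i j, d i ≠ d j → M i j = 0 := by
  simp only [← Matrix.ext_iff, mul_diagonal, diagonal_mul]
  refine forall₂_congr fun i j => ?_
  rw [mul_comm (d i), ← sub_eq_zero, ← mul_sub, mul_eq_zero, sub_eq_zero, ne_comm]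
  tauto

lemma mul_Imat_eq_Imat_mul_iff (C : Matrix (Fin 3) (Fin 3) ℝ) :
    C * Imat = Imat * C ↔ C 0 1 = 0 ∧ C 0 2 = 0 ∧ C 1 0 = 0 ∧ C 2 0 = 0 := by
  rw [Imat, mul_diagonal_eq_diagonal_mul_iff]
  norm_num [Fin.forall_fin_succ, and_assoc]

lemma Imat_mul_Imat : Imat * Imat = 1 := by
  rw [Imat, diagonal_mul_diagonal, ← diagonal_one]
  congr 1
  ext i
  fin_cases i <;> norm_num

lemma exists_cos_sin_eq {a b : ℝ} (h : a ^ 2 + b ^ 2 = 1) :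
    ∃ η : ℝ, Real.cos η = a ∧ Real.sin η = b := by
  obtain ⟨η, hη⟩ := (Complex.norm_eq_one_iff ⟨a, b⟩).1 (by
    rw [Complex.norm_def, Complex.normSq_mk, ← sq, ← sq, h, Real.sqrt_one])
  exact ⟨η, by simpa using congrArg Complex.re hη, by simpa using congrArg Complex.im hη⟩

lemma exists_rotation_of_orthonormal_rows {a b c d : ℝ} (hrow : a ^ 2 + b ^ 2 = 1)
    (horth : a * c + b * d = 0) (hdet : a * d - b * c = 1) :
    ∃ η : ℝ, a = Real.cos η ∧ b = -Real.sin η ∧ c = Real.sin η ∧ d = Real.cos η := by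
  have hda : d = a := by linear_combination (-d) * hrow + a * hdet + b * horth
  have hcb : c = -b := by linear_combination a * horth - b * hdet - c * hrow
  obtain ⟨η, hcos, hsin⟩ := exists_cos_sin_eq (a := a) (b := -b) (by rwa [neg_sq])
  exact ⟨η, hcos.symm, by rw [hsin, neg_neg], by rw [hcb, hsin], by rw [hda, hcos]⟩

lemma inSO21.mul_Imat_mul_transpose {C : Matrix (Fin 3) (Fin 3) ℝ} (hC : inSO21 C) :
    C * Imat * Cᵀ = Imat := by
  have h := mul_nonsing_inv C (by rw [hC.2.1]; exact isUnit_one)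
  rw [hC.1] at h
  calc C * Imat * Cᵀ = C * (Imat * Cᵀ * Imat) * Imat := by
        simp only [Matrix.mul_assoc, Imat_mul_Imat, Matrix.mul_one]
    _ = Imat := by rw [h, Matrix.one_mul]

lemma inSO21.exists_eq_Kmat {C : Matrix (Fin 3) (Fin 3) ℝ} (hC : inSO21 C)
    (h01 : C 0 1 = 0) (h02 : C 0 2 = 0) (h10 : C 1 0 = 0) (h20 : C 2 0 = 0) :
    ∃ η : ℝ, C = Kmat η := by
  have entry : ∀ i j, (C * Imat * Cᵀ) i j = Imat i j := fun i j => by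
    rw [hC.mul_Imat_mul_transpose]
  have e00 := entry 0 0
  have e11 := entry 1 1
  have e12 := entry 1 2
  simp only [Imat, Fin.isValue, mul_apply, Fin.sum_univ_three, h01, h02, h10, h20, zero_mul,
    add_zero, zero_add, transpose_apply, diagonal_apply_eq, diagonal_apply_ne, cons_val_zero,
    cons_val_one, cons_val, mul_neg, mul_one, neg_mul, mul_zero, ne_eq, zero_ne_one, one_ne_zero,
    not_false_eq_true, Fin.reduceEq, neg_inj] at e00 e11 e12
  have h00 : C 0 0 = 1 := by nlinarith [hC.2.2]
  have hdet := hC.2.1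
  rw [det_fin_three, h00, h01, h02, h10, h20] at hdet
  obtain ⟨η, h11, h12, h21, h22⟩ := exists_rotation_of_orthonormal_rows
    (by linear_combination e11) e12 (by linear_combination hdet)
  refine ⟨η, ?_⟩
  ext i j
  fin_cases i <;> fin_cases j <;> simp [Kmat, *]

theorem stmt14 (C : Matrix (Fin 3) (Fin 3) ℝ) (hC : inSO21 C) :
    C * Imat = Imat * C ↔ ∃ η : ℝ, C = Kmat η := by
  rw [mul_Imat_eq_Imat_mul_iff]
  constructor
  · rintro ⟨h01, h02, h10, h20⟩
    exact hC.exists_eq_Kmat h01 h02 h10 h20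
  · rintro ⟨η, rfl⟩
    simp [Kmat]
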